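/- arXiv:1612.06915 — 3 statements merged into one kernel-verified Lean document; each statement's English description precedes it below -/
import Mathlib

section
/- Let Z be a finite set (of terminal states) with weights π : Z → ℝ with π z ≥ 0 for all z and ∑_{z ∈ Z} π z = 1. Let H be a finite set (the states of one part of the partition), A a finite set (of actions), and let φ : Z → Option (H × A) assign to each terminal state its unique observed state–action pair in this part (or none). Define p(h,a) = ∑_{z : φ z = some (h,a)} π z and p(h) = ∑_{a ∈ A} p(h,a). Suppose there are weights q : H → ℝ (the known players' reach probabilities), s : H × A → ℝ (the known players' reach probabilities after an action), with q h ≥ 0, s(h,a) ≥ 0, ∑_{a ∈ A} s(h,a) = q h for every h ∈ H, and a constant c > 0 (the opponents' reach probability, constant on the part) such that p(h) = c · q h and p(h,a) = c · s(h,a) for all h ∈ H, a ∈ A. Assume ∑_{h ∈ H} q h > 0 and, for every a ∈ A with ∑_{h∈H} s(h,a) = 0, also p(h,a) = 0 for all h (no observation of zero-probability actions). Let u : H × A → ℝ be an arbitrary value function, and define the correction term k : Z → ℝ by k(z) = (∑_{a ∈ A} ∑_{h ∈ H} s(h,a)·u(h,a)) / (∑_{h ∈ H} q h) − (∑_{h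 ∈ H} s(h,a₀)·u(h,a₀)) / (∑_{h ∈ H} s(h,a₀)) if φ z = some (h₀, a₀) for some h₀ (where the second fraction is taken to be 0 if its denominator is 0), and k(z) = 0 if φ z = none. Then the expected correction term is zero: ∑_{z ∈ Z} π z · k z = 0. -/
/-- Lemma 1 of the AIVAT paper: the correction term `k_H` for a single part `H`
of the partition of the known players' decision states has expected value zero
under the distribution `π` over terminal states. -/
theorem aivat_single_part_correction_zero
    {Z H A : Type*} [Fintype Z] [Fintype H] [Fintype A]
    [DecidableEq H] [DecidableEq A]
    (π : Z → ℝ) (hπ : ∀ z, 0 ≤ π z) (hπsum : ∑ z, π z = 1)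
    (φ : Z → Option (H × A))
    -- p(h,a) and p(h)
    (p : H → A → ℝ)
    (hp : ∀ h a, p h a = ∑ z ∈ Finset.univ.filter (fun z => φ z = some (h, a)), π z)
    (pH : H → ℝ) (hpH : ∀ h, pH h = ∑ a, p h a)
    -- known players' reach probabilities
    (q : H → ℝ) (s : H × A → ℝ)
    (hq : ∀ h, 0 ≤ q h) (hs : ∀ h a, 0 ≤ s (h, a))
    (hsq : ∀ h, ∑ a, s (h, a) = q h)
    -- constant opponent reach probability on the part
    (c : ℝ) (hc : 0 < c)
    (hfactH : ∀ h, pH h = c * q h)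
    (hfact : ∀ h a, p h a = c * s (h, a))
    (hqpos : 0 < ∑ h, q h)
    -- no observation of zero-probability actions
    (hnoobs : ∀ a, (∑ h, s (h, a)) = 0 → ∀ h, p h a = 0)
    -- arbitrary value function
    (u : H × A → ℝ)
    -- the correction term (division by zero is 0 in ℝ, matching the convention)
    (k : Z → ℝ)
    (hk : ∀ z, k z = match φ z with
      | none => 0
      | some (_, a₀) =>
          (∑ a, ∑ h, s (h, a) * u (h, a)) / (∑ h, q h)
            - (∑ h, s (h, a₀) * u (h, a₀)) / (∑ h, s (h, a₀))) :
    ∑ z, π z * k z = 0 := by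
  classical
  set T := ∑ a, ∑ h, s (h, a) * u (h, a) with hT
  set Q := ∑ h, q h with hQ
  have hQne : Q ≠ 0 := ne_of_gt hqpos
  set f : A → ℝ := fun a => T / Q - (∑ h, s (h, a) * u (h, a)) / (∑ h, s (h, a))
    with hf
  have key : ∑ z, π z * k z
      = ∑ o : Option (H × A), ∑ z ∈ Finset.univ.filter (fun z => φ z = o),
          π z * k z :=
    (Finset.sum_fiberwise_of_maps_to (fun x _ => Finset.mem_univ _) _).symm
  rw [key, Fintype.sum_option]
  have hnone : ∑ z ∈ Finset.univ.filter (fun z => φ z = none), π z * k z = 0 := by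
    apply Finset.sum_eq_zero
    intro z hz
    simp only [Finset.mem_filter] at hz
    rw [hk z, hz.2]
    simp
  have hsome : ∀ ha : H × A,
      ∑ z ∈ Finset.univ.filter (fun z => φ z = some ha), π z * k z
        = p ha.1 ha.2 * f ha.2 := by
    rintro ⟨h, a⟩
    have : ∀ z ∈ Finset.univ.filter (fun z => φ z = some (h, a)),
        π z * k z = π z * f a := by
      intro z hz
      simp only [Finset.mem_filter] at hz
      rw [hk z, hz.2]
    rw [Finset.sum_congr rfl this, ← Finset.sum_mul, ← hp]
  rw [hnone, zero_add, Finset.sum_congr rfl (fun ha _ => hsome ha)]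
  have hprod : ∑ ha : H × A, p ha.1 ha.2 * f ha.2
      = ∑ a, (∑ h, p h a) * f a := by
    rw [Fintype.sum_prod_type, Finset.sum_comm]
    simp [Finset.sum_mul]
  rw [hprod]
  have hterm : ∀ a, (∑ h, p h a) * f a
      = c * ((∑ h, s (h, a)) * (T / Q) - ∑ h, s (h, a) * u (h, a)) := by
    intro a
    have hpc : (∑ h, p h a) = c * ∑ h, s (h, a) := by
      simp [hfact, Finset.mul_sum]
    by_cases hSa : (∑ h, s (h, a)) = 0
    · have hU : (∑ h, s (h, a) * u (h, a)) = 0 := by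
        apply Finset.sum_eq_zero
        intro h _
        have := (Finset.sum_eq_zero_iff_of_nonneg (fun h _ => hs h a)).mp hSa h
          (Finset.mem_univ h)
        rw [this, zero_mul]
      rw [hpc, hSa, hU]
      ring
    · rw [hpc, hf]
      field_simp
  rw [Finset.sum_congr rfl (fun a _ => hterm a), ← Finset.mul_sum]
  have hQS : ∑ a, ∑ h, s (h, a) = Q := by
    rw [Finset.sum_comm, hQ]
    exact Finset.sum_congr rfl (fun h _ => hsq h)
  rw [Finset.sum_sub_distrib, ← Finset.sum_mul, hQS, ← hT,
    mul_comm Q, div_mul_cancel₀ T hQne, sub_self, mul_zero]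
end

section
/- Let Z be a finite set, π : Z → ℝ with π z ≥ 0 and ∑_{z ∈ Z} π z = 1, and let 𝓗 be a finite index set with, for each H ∈ 𝓗, finite sets of states and actions, a partial assignment φ_H : Z → Option (states_H × actions_H), weights q_H, s_H, constant c_H > 0, and value function u_H satisfying all the hypotheses of the single-part correction-term lemma (p_H(h) = c_H · q_H h, p_H(h,a) = c_H · s_H(h,a), ∑_a s_H(h,a) = q_H h, ∑_h q_H h > 0, and no observation of actions with ∑_h s_H(h,a) = 0), with k_H : Z → ℝ the corresponding correction term. Then the expected value of the total correction is zero: ∑_{z ∈ Z} π z · (∑_{H ∈ 𝓗} k_H z) = 0. -/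
/-- The Theorem of the AIVAT paper: the sum over all parts `H` of the partition `𝓗`
of the AIVAT correction terms `k_H` has expected value zero under the distribution
`π` over terminal states. -/
theorem aivat_total_correction_zero
    {Z : Type*} [Fintype Z]
    {ι : Type*} [Fintype ι]
    (π : Z → ℝ) (hπ : ∀ z, 0 ≤ π z) (hπsum : ∑ z, π z = 1)
    -- per-part data: states, actions, partial assignment, reach weights, value function
    (St Ac : ι → Type*) [∀ i, Fintype (St i)] [∀ i, Fintype (Ac i)]
    [∀ i, DecidableEq (St i)] [∀ i, DecidableEq (Ac i)]
    (φ : ∀ i, Z → Option (St i × Ac i))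
    (p : ∀ i, St i → Ac i → ℝ)
    (hp : ∀ i h a, p i h a = ∑ z ∈ Finset.univ.filter (fun z => φ i z = some (h, a)), π z)
    (pH : ∀ i, St i → ℝ) (hpH : ∀ i h, pH i h = ∑ a, p i h a)
    (q : ∀ i, St i → ℝ) (s : ∀ i, St i × Ac i → ℝ)
    (hq : ∀ i h, 0 ≤ q i h) (hs : ∀ i h a, 0 ≤ s i (h, a))
    (hsq : ∀ i h, ∑ a, s i (h, a) = q i h)
    (c : ι → ℝ) (hc : ∀ i, 0 < c i)
    (hfactH : ∀ i h, pH i h = c i * q i h)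
    (hfact : ∀ i h a, p i h a = c i * s i (h, a))
    (hqpos : ∀ i, 0 < ∑ h, q i h)
    (hnoobs : ∀ i a, (∑ h, s i (h, a)) = 0 → ∀ h, p i h a = 0)
    (u : ∀ i, St i × Ac i → ℝ)
    -- the correction terms (division by zero is 0 in ℝ, matching the convention)
    (k : ι → Z → ℝ)
    (hk : ∀ i z, k i z = match φ i z with
      | none => 0
      | some (_, a₀) =>
          (∑ a, ∑ h, s i (h, a) * u i (h, a)) / (∑ h, q i h)
            - (∑ h, s i (h, a₀) * u i (h, a₀)) / (∑ h, s i (h, a₀))) :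
    ∑ z, π z * (∑ i, k i z) = 0 := by
  have key : ∀ i, ∑ z, π z * k i z = 0 := by
    intro i
    set E := (∑ a, ∑ h, s i (h, a) * u i (h, a)) / (∑ h, q i h) with hE
    have hfib : ∑ z, π z * k i z
        = ∑ x : St i × Ac i, p i x.1 x.2 *
            (E - (∑ h, s i (h, x.2) * u i (h, x.2)) / (∑ h, s i (h, x.2))) := by
      rw [← Finset.sum_fiberwise Finset.univ (φ i) (fun z => π z * k i z),
        Fintype.sum_option]
      have h0 : ∑ z ∈ Finset.univ.filter (fun z => φ i z = none), π z * k i z = 0 := by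
        apply Finset.sum_eq_zero
        intro z hz
        simp only [Finset.mem_filter] at hz
        rw [hk i z, hz.2]
        simp
      rw [h0, zero_add]
      apply Finset.sum_congr rfl
      intro x _
      rw [hp i x.1 x.2, Finset.sum_mul]
      apply Finset.sum_congr rfl
      intro z hz
      simp only [Finset.mem_filter] at hz
      rw [hk i z, hz.2]
    rw [hfib]
    have hrw : ∀ x : St i × Ac i, p i x.1 x.2 *
          (E - (∑ h, s i (h, x.2) * u i (h, x.2)) / (∑ h, s i (h, x.2)))
        = c i * (s i x * E - s i x * ((∑ h, s i (h, x.2) * u i (h, x.2)) / (∑ h, s i (h, x.2)))) := by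
      intro x
      rw [hfact i x.1 x.2]
      ring
    rw [Finset.sum_congr rfl (fun x _ => hrw x), ← Finset.mul_sum]
    have : ∑ x : St i × Ac i,
        (s i x * E - s i x * ((∑ h, s i (h, x.2) * u i (h, x.2)) / (∑ h, s i (h, x.2)))) = 0 := by
      rw [Finset.sum_sub_distrib]
      have h1 : ∑ x : St i × Ac i, s i x * E = ∑ a, ∑ h, s i (h, a) * u i (h, a) := by
        rw [← Finset.sum_mul]
        have : ∑ x : St i × Ac i, s i x = ∑ h, q i h := by
          rw [Fintype.sum_prod_type]
          exact Finset.sum_congr rfl fun h _ => hsq i h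
        rw [this, hE, mul_div_cancel₀]
        exact (hqpos i).ne'
      have h2 : ∑ x : St i × Ac i,
          s i x * ((∑ h, s i (h, x.2) * u i (h, x.2)) / (∑ h, s i (h, x.2)))
          = ∑ a, ∑ h, s i (h, a) * u i (h, a) := by
        rw [Fintype.sum_prod_type_right]
        apply Finset.sum_congr rfl
        intro a _
        dsimp only
        rw [← Finset.sum_mul]
        by_cases hS : (∑ h, s i (h, a)) = 0
        · have hz : ∀ h, s i (h, a) = 0 := by
            intro h
            have := (Finset.sum_eq_zero_iff_of_nonneg (fun h _ => hs i h a)).mp hS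
            exact this h (Finset.mem_univ h)
          simp [hS, hz]
        · rw [mul_div_cancel₀ _ hS]
      rw [h1, h2, sub_self]
    rw [this, mul_zero]
  calc ∑ z, π z * (∑ i, k i z) = ∑ i, ∑ z, π z * k i z := by
        rw [Finset.sum_comm]
        exact Finset.sum_congr rfl fun z _ => Finset.mul_sum _ _ _
    _ = 0 := by simp [key]
end

section
/- Let Z be a finite set with weights π : Z → ℝ, π z ≥ 0 for all z and ∑_{z ∈ Z} π z = 1, and let 𝓦 be a partition of Z (e.g., a Finpartition of Z, or an equivalence relation with map W : Z → parts). Suppose r : Z → ℝ with r z > 0 for all z (the known players' reach probabilities) is such that on each part W of 𝓦 the ratio π z / r z is constant, i.e., for all z, z' in the same part, π z · r z' = π z' · r z. Then for any value function v : Z → ℝ, the imaginary-observation estimator is unbiased: ∑_{z ∈ Z} π z · ((∑_{z' ∈ W(z)} r z' · v z') / (∑_{z' ∈ W(z)} r z')) = ∑_{z ∈ Z} π z · v z. -/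
/-- Unbiasedness of the importance-sampling base value used by AIVAT (imaginary
observations): `W z` is the part of the partition of terminal states containing `z`,
`r z` is the known players' reach probability, and the opponents' contribution
`π z / r z` is constant on each part. The part-wise `r`-weighted average of `v`
is an unbiased estimator of the expected value of `v`. -/
theorem aivat_base_value_unbiased
    {Z : Type*} [Fintype Z] [DecidableEq Z]
    (π : Z → ℝ) (hπ : ∀ z, 0 ≤ π z) (hπsum : ∑ z, π z = 1)
    -- W z is the part containing z (W is the part-map of a partition of Z)
    (W : Z → Finset Z)
    (hWmem : ∀ z, z ∈ W z)
    (hWpart : ∀ z z', z' ∈ W z → W z' = W z)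
    (r : Z → ℝ) (hr : ∀ z, 0 < r z)
    -- π z / r z is constant on each part
    (hconst : ∀ z z', z' ∈ W z → π z * r z' = π z' * r z)
    (v : Z → ℝ) :
    ∑ z, π z * ((∑ z' ∈ W z, r z' * v z') / (∑ z' ∈ W z, r z')) = ∑ z, π z * v z := by
  have hB : ∀ z, (0:ℝ) < ∑ z' ∈ W z, r z' :=
    fun z => Finset.sum_pos (fun i _ => hr i) ⟨z, hWmem z⟩
  have hsym : ∀ z z', z' ∈ W z ↔ z ∈ W z' := by
    intro z z'
    constructor
    · intro h; rw [hWpart z z' h]; exact hWmem z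
    · intro h; rw [hWpart z' z h]; exact hWmem z'
  have key : ∀ z, π z * ((∑ z' ∈ W z, r z' * v z') / (∑ z' ∈ W z, r z'))
      = ∑ z' ∈ W z, π z' * r z * v z' / (∑ w ∈ W z', r w) := by
    intro z
    rw [← mul_div_assoc, Finset.mul_sum, Finset.sum_div]
    refine Finset.sum_congr rfl fun z' hz' => ?_
    rw [hWpart z z' hz', ← mul_assoc, hconst z z' hz']
  calc ∑ z, π z * ((∑ z' ∈ W z, r z' * v z') / (∑ z' ∈ W z, r z'))
      = ∑ z, ∑ z' ∈ W z, π z' * r z * v z' / (∑ w ∈ W z', r w) :=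
        Finset.sum_congr rfl fun z _ => key z
    _ = ∑ z', ∑ z ∈ W z', π z' * r z * v z' / (∑ w ∈ W z', r w) := by
        refine Finset.sum_comm' fun z z' => ?_
        simp [hsym z z']
    _ = ∑ z', π z' * v z' := by
        refine Finset.sum_congr rfl fun z' _ => ?_
        rw [← Finset.sum_div]
        have h1 : ∑ z ∈ W z', π z' * r z * v z'
            = (π z' * v z') * ∑ z ∈ W z', r z := by
          rw [Finset.mul_sum]
          exact Finset.sum_congr rfl fun z _ => by ring
        rw [h1, mul_div_assoc, div_self (hB z').ne', mul_one]
end
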